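/- Let d ≥ 1, let T ⊆ ℝ^d be a nonempty bounded open set, and let k ≥ 0. Denote by V the finite-dimensional real vector space of d-variate real polynomials of total degree at most k+1. For every linear map ℓ : V → ℝ that vanishes on constant polynomials and every c ∈ ℝ, there exists a unique p ∈ V such that ∫_T ∇(p)(x) · ∇(w)(x) dx = ℓ(w) for all w ∈ V and ∫_T p(x) dx = c. (Well-posedness of the local problem defining the scalar potential reconstruction p_T^{k+1}, whose computation requires solving a small linear system on each mesh element.) -/

import Mathlib

/-!
Adding the rank-one term `(∫_T p)(∫_T w)` to `∫_T ∇p·∇w` gives a bilinear form whose associated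
map `V → V*` is injective: if it kills `p`, testing against `1` gives `∫_T p = 0`, and then
`∫_T |∇p|² = 0` forces `∇p` to vanish on the open set `T`, hence as a polynomial, so `p` is a
constant of zero mean. By finite dimensionality this map is bijective, and since `ℓ` vanishes
on constants, `p` solves the problem iff it maps to `ℓ + c ∫_T ·`.
-/

open MeasureTheory MvPolynomial

theorem LinearMap.existsUnique_eq_and_eq_of_compatible {K V : Type*} [Field K] [AddCommGroup V]
    [Module K V] [FiniteDimensional K V] (B : V →ₗ[K] Module.Dual K V) (I : Module.Dual K V)
    {e : V} (hBe : ∀ p, B p e = 0) (hIe : I e ≠ 0) (hBI : ∀ p, B p = 0 → I p = 0 → p = 0)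
    {ℓ : Module.Dual K V} (hℓ : ℓ e = 0) (c : K) :
    ∃! p, B p = ℓ ∧ I p = c := by
  set A := B + I.smulRight I
  have hA_inj : Function.Injective A := by
    refine LinearMap.ker_eq_bot.mp (LinearMap.ker_eq_bot'.mpr fun p hp => ?_)
    have hIp : I p = 0 := by
      simpa [A, hBe, hIe] using LinearMap.congr_fun hp e
    exact hBI p (by simpa [A, hIp] using hp) hIp
  have hA_bij : Function.Bijective A :=
    ⟨hA_inj, (LinearMap.injective_iff_surjective_of_finrank_eq_finrank
      Subspace.dual_finrank_eq.symm).mp hA_inj⟩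
  refine (existsUnique_congr fun p => ?_).mpr (hA_bij.existsUnique (ℓ + c • I))
  constructor
  · rintro ⟨rfl, rfl⟩
    rfl
  · intro h
    have hIp : I p = c := by
      have := LinearMap.congr_fun h e
      simp only [A, LinearMap.add_apply, LinearMap.smulRight_apply, hBe, hℓ,
        LinearMap.smul_apply, smul_eq_mul, zero_add] at this
      exact mul_right_cancel₀ hIe this
    exact ⟨by simpa [A, hIp] using h, hIp⟩

namespace MvPolynomial

theorem eq_C_of_pderiv_eq_zero {R σ : Type*} [CommRing R] [IsDomain R] [CharZero R]
    {q : MvPolynomial σ R} (h : ∀ i, pderiv i q = 0) : q = C (coeff 0 q) := by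
  classical
  ext m
  rw [coeff_C]
  split_ifs with hm
  · rw [hm]
  obtain ⟨i, hi⟩ : ∃ i, m i ≠ 0 := by simpa [Finsupp.ext_iff] using Ne.symm hm
  have hle : Finsupp.single i 1 ≤ m := Finsupp.single_le_iff.mpr (Nat.one_le_iff_ne_zero.mpr hi)
  have := coeff_pderiv (i := i) q (m - Finsupp.single i 1)
  rw [h i, coeff_zero, tsub_add_cancel_of_le hle] at this
  exact (mul_eq_zero.mp this.symm).resolve_right (Nat.cast_add_one_ne_zero _)

theorem eq_zero_of_eqOn_zero_of_isOpen {𝕜 ι : Type*} [RCLike 𝕜] [Fintype ι]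
    {U : Set (ι → 𝕜)} (hU : IsOpen U) (hne : U.Nonempty) {q : MvPolynomial ι 𝕜}
    (h : Set.EqOn (fun x => eval x q) 0 U) : q = 0 := by
  obtain ⟨x₀, hx₀⟩ := hne
  have hanalytic : AnalyticOnNhd 𝕜 (fun x => eval x q) Set.univ :=
    AnalyticOnNhd.eval_continuousLinearMap (.id 𝕜 (ι → 𝕜)) q
  have hq : Set.EqOn (fun x => eval x q) 0 Set.univ :=
    hanalytic.eqOn_zero_of_preconnected_of_eventuallyEq_zero isPreconnected_univ
      (Set.mem_univ x₀) (Filter.eventually_of_mem (hU.mem_nhds hx₀) h)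
  exact MvPolynomial.funext fun x => by simpa using hq (Set.mem_univ x)

section Integration

variable {ι : Type*} [Fintype ι] {μ : Measure (ι → ℝ)} [IsFiniteMeasureOnCompacts μ]
  {T : Set (ι → ℝ)}

theorem integrableOn_eval (hT : Bornology.IsBounded T) (q : MvPolynomial ι ℝ) :
    IntegrableOn (fun x => eval x q) T μ :=
  ((continuous_eval q).continuousOn.integrableOn_compact hT.isCompact_closure).mono_set
    subset_closure

variable (μ) in
noncomputable def setIntegralₗ (hT : Bornology.IsBounded T) : MvPolynomial ι ℝ →ₗ[ℝ] ℝ where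
  toFun q := ∫ x in T, eval x q ∂μ
  map_add' p q := by
    simp only [map_add]
    exact integral_add (integrableOn_eval hT p) (integrableOn_eval hT q)
  map_smul' r q := by
    simp only [smul_eval, RingHom.id_apply, smul_eq_mul]
    exact integral_const_mul r _

theorem setIntegralₗ_apply (hT : Bornology.IsBounded T) (q : MvPolynomial ι ℝ) :
    setIntegralₗ μ hT q = ∫ x in T, eval x q ∂μ := rfl

theorem setIntegralₗ_C (hT : Bornology.IsBounded T) (a : ℝ) :
    setIntegralₗ μ hT (C a) = a * setIntegralₗ μ hT 1 := by
  rw [C_eq_smul_one, map_smul, smul_eq_mul]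

end Integration

section Gradient

variable {R ι : Type*} [CommSemiring R] [Fintype ι]

variable (R ι) in
noncomputable def gradDot : MvPolynomial ι R →ₗ[R] MvPolynomial ι R →ₗ[R] MvPolynomial ι R :=
  ∑ i, (LinearMap.mul R _).compl₁₂ (pderiv i).toLinearMap (pderiv i).toLinearMap

theorem gradDot_apply (p w : MvPolynomial ι R) :
    gradDot R ι p w = ∑ i, pderiv i p * pderiv i w := by
  simp [gradDot]

theorem gradDot_one (p : MvPolynomial ι R) : gradDot R ι p 1 = 0 := by
  simp [gradDot_apply]

theorem eval_gradDot (x : ι → R) (p w : MvPolynomial ι R) :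
    eval x (gradDot R ι p w) = ∑ i, eval x (pderiv i p) * eval x (pderiv i w) := by
  simp [gradDot_apply]

end Gradient

section Energy

variable {ι : Type*} [Fintype ι] {μ : Measure (ι → ℝ)} [IsFiniteMeasureOnCompacts μ]
  [μ.IsOpenPosMeasure] {T : Set (ι → ℝ)}

theorem setIntegralₗ_one_ne_zero (hTo : IsOpen T) (hTne : T.Nonempty)
    (hTb : Bornology.IsBounded T) : setIntegralₗ μ hTb 1 ≠ 0 := by
  simpa [setIntegralₗ_apply, Measure.real] using
    (ENNReal.toReal_pos (hTo.measure_ne_zero μ hTne) hTb.measure_lt_top.ne).ne'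

theorem pderiv_eq_zero_of_setIntegral_gradDot_self_eq_zero (hTo : IsOpen T) (hTne : T.Nonempty)
    (hTb : Bornology.IsBounded T) {p : MvPolynomial ι ℝ}
    (h : setIntegralₗ μ hTb (gradDot ℝ ι p p) = 0) (i : ι) : pderiv i p = 0 := by
  have hnonneg : ∀ x, 0 ≤ eval x (gradDot ℝ ι p p) := fun x => by
    rw [eval_gradDot]
    exact Finset.sum_nonneg fun j _ => mul_self_nonneg _
  have hae : (fun x => eval x (gradDot ℝ ι p p)) =ᵐ[μ.restrict T] 0 :=
    (setIntegral_eq_zero_iff_of_nonneg_ae (.of_forall hnonneg) (integrableOn_eval hTb _)).mp h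
  have hT : Set.EqOn (fun x => eval x (gradDot ℝ ι p p)) 0 T :=
    Measure.eqOn_open_of_ae_eq hae hTo (continuous_eval _).continuousOn continuousOn_const
  refine eq_zero_of_eqOn_zero_of_isOpen hTo hTne fun x hx => ?_
  have hsum : ∑ j, eval x (pderiv j p) * eval x (pderiv j p) = 0 := by
    simpa [eval_gradDot] using hT hx
  exact mul_self_eq_zero.mp <|
    (Finset.sum_eq_zero_iff_of_nonneg fun j _ => mul_self_nonneg _).mp hsum i (Finset.mem_univ i)

theorem eq_zero_of_setIntegral_gradDot_self_eq_zero_of_setIntegral_eq_zero (hTo : IsOpen T)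
    (hTne : T.Nonempty) (hTb : Bornology.IsBounded T) {p : MvPolynomial ι ℝ}
    (hgrad : setIntegralₗ μ hTb (gradDot ℝ ι p p) = 0) (hmean : setIntegralₗ μ hTb p = 0) :
    p = 0 := by
  have hp := eq_C_of_pderiv_eq_zero <|
    pderiv_eq_zero_of_setIntegral_gradDot_self_eq_zero hTo hTne hTb hgrad
  rw [hp, setIntegralₗ_C, mul_eq_zero, or_iff_left (setIntegralₗ_one_ne_zero hTo hTne hTb)]
    at hmean
  rw [hp, hmean, C_0]

end Energy

end MvPolynomial

theorem scalar_potential_reconstruction_wellPosed_general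
    (d k : ℕ) (T : Set (Fin d → ℝ))
    (hTopen : IsOpen T) (hTne : T.Nonempty) (hTbdd : Bornology.IsBounded T)
    (ℓ : (MvPolynomial.restrictTotalDegree (Fin d) ℝ (k + 1)) →ₗ[ℝ] ℝ)
    (hℓ : ∀ r : MvPolynomial.restrictTotalDegree (Fin d) ℝ (k + 1),
      (∃ a : ℝ, (r : MvPolynomial (Fin d) ℝ) = MvPolynomial.C a) → ℓ r = 0)
    (c : ℝ) :
    ∃! p : MvPolynomial.restrictTotalDegree (Fin d) ℝ (k + 1),
      (∀ w : MvPolynomial.restrictTotalDegree (Fin d) ℝ (k + 1),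
        ∫ x in T, ∑ i : Fin d,
          eval x (pderiv i (p : MvPolynomial (Fin d) ℝ)) *
            eval x (pderiv i (w : MvPolynomial (Fin d) ℝ)) = ℓ w) ∧
      ∫ x in T, eval x (p : MvPolynomial (Fin d) ℝ) = c := by
  let V := restrictTotalDegree (Fin d) ℝ (k + 1)
  let one : V := ⟨1, by simp [V, mem_restrictTotalDegree]⟩
  let I := (setIntegralₗ volume hTbdd).comp V.subtype
  let B := ((gradDot ℝ (Fin d)).compl₁₂ V.subtype V.subtype).compr₂ (setIntegralₗ volume hTbdd)
  have := LinearMap.existsUnique_eq_and_eq_of_compatible B I (e := one)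
    (fun p => by simp [B, one, gradDot_one]) (setIntegralₗ_one_ne_zero hTopen hTne hTbdd)
    (fun p hB hI => Subtype.ext <|
      eq_zero_of_setIntegral_gradDot_self_eq_zero_of_setIntegral_eq_zero hTopen hTne hTbdd
        (LinearMap.congr_fun hB p) hI)
    (hℓ one ⟨1, C_1.symm⟩) c
  simpa [LinearMap.ext_iff, B, I, setIntegralₗ_apply, eval_gradDot] using this

/-- Well-posedness of the local problem defining the scalar potential reconstruction
`p_T^{k+1}` of the HHO method: on a nonempty bounded open set `T ⊆ ℝ^d` (`d ≥ 1`),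
for every linear functional `ℓ` on the space `V` of `d`-variate real polynomials of
total degree at most `k+1` vanishing on constant polynomials, and every `c ∈ ℝ`, there
is a unique `p ∈ V` with `∫_T ∇p · ∇w = ℓ(w)` for all `w ∈ V` and `∫_T p = c`. -/
theorem scalar_potential_reconstruction_wellPosed
    (d k : ℕ) (hd : 1 ≤ d) (T : Set (Fin d → ℝ))
    (hTopen : IsOpen T) (hTne : T.Nonempty) (hTbdd : Bornology.IsBounded T)
    (ℓ : (MvPolynomial.restrictTotalDegree (Fin d) ℝ (k + 1)) →ₗ[ℝ] ℝ)
    (hℓ : ∀ r : MvPolynomial.restrictTotalDegree (Fin d) ℝ (k + 1),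
      (∃ a : ℝ, (r : MvPolynomial (Fin d) ℝ) = MvPolynomial.C a) → ℓ r = 0)
    (c : ℝ) :
    ∃! p : MvPolynomial.restrictTotalDegree (Fin d) ℝ (k + 1),
      (∀ w : MvPolynomial.restrictTotalDegree (Fin d) ℝ (k + 1),
        ∫ x in T, ∑ i : Fin d,
          eval x (pderiv i (p : MvPolynomial (Fin d) ℝ)) *
            eval x (pderiv i (w : MvPolynomial (Fin d) ℝ)) = ℓ w) ∧
      ∫ x in T, eval x (p : MvPolynomial (Fin d) ℝ) = c :=
  scalar_potential_reconstruction_wellPosed_general d k T hTopen hTne hTbdd ℓ hℓ c
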